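/- arXiv:1405.7504 — 2 statements merged into one kernel-verified Lean document; each statement's English description precedes it below -/
import Mathlib

section
/- Criterion for containing a copy of Łₙ: let n ≥ 1 and let A be an MV-algebra, and for k ∈ ℕ and x ∈ A define k·x by 0·x = 0 and (k+1)·x = x ⊕ (k·x). Then there exists an embedding of MV-algebras from Łₙ into A if and only if there exists a ∈ A with a ≠ ¬0 and (n−1)·(¬a) = a. -/
universe u v

/-- An MV-algebra: operations ⊕, ¬, 0 satisfying MV1–MV6. -/
structure MVAlgebra (A : Type u) where
  oplus : A → A → A
  neg : A → A
  zero : A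
  mv1 : ∀ x y z, oplus (oplus x y) z = oplus x (oplus y z)
  mv2 : ∀ x y, oplus x y = oplus y x
  mv3 : ∀ x, oplus x zero = x
  mv4 : ∀ x, neg (neg x) = x
  mv5 : ∀ x, oplus x (neg zero) = neg zero
  mv6 : ∀ x y, oplus (neg (oplus (neg x) y)) y = oplus (neg (oplus x (neg y))) x

/-- The carrier of the Łukasiewicz chain Łₙ : {k/n : k ∈ ℕ, 0 ≤ k ≤ n} ⊆ ℚ. -/
abbrev Luk (n : ℕ+) : Type := {x : ℚ // ∃ k : ℕ, k ≤ (n : ℕ) ∧ x = (k : ℚ) / (n : ℕ)}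

/-- The constant 0 of Łₙ. -/
def lukZero (n : ℕ+) : Luk n := ⟨0, 0, Nat.zero_le _, by simp⟩

/-- The negation ¬x = 1 - x of Łₙ. -/
def lukNeg {n : ℕ+} (x : Luk n) : Luk n :=
  ⟨1 - x.1, by
    obtain ⟨k, hk, hx⟩ := x.2
    refine ⟨(n : ℕ) - k, Nat.sub_le _ _, ?_⟩
    have hn : ((n : ℕ) : ℚ) ≠ 0 := by exact_mod_cast n.pos.ne'
    rw [hx, Nat.cast_sub hk, sub_div, div_self hn]⟩

/-- The truncated sum x ⊕ y = min 1 (x + y) of Łₙ. -/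
def lukOplus {n : ℕ+} (x y : Luk n) : Luk n :=
  ⟨min 1 (x.1 + y.1), by
    obtain ⟨k, hk, hx⟩ := x.2
    obtain ⟨j, hj, hy⟩ := y.2
    refine ⟨min (n : ℕ) (k + j), min_le_left _ _, ?_⟩
    have hn : (0 : ℚ) < ((n : ℕ) : ℚ) := by exact_mod_cast n.pos
    rw [hx, hy, ← add_div]
    rcases le_total (k + j) (n : ℕ) with h | h
    · rw [min_eq_right h, min_eq_right]
      · push_cast; ring_nf
      · rw [div_le_one hn]; exact_mod_cast h
    · rw [min_eq_left h, min_eq_left, div_self hn.ne']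
      · rw [one_le_div hn]; exact_mod_cast h⟩

/-- k·x in an MV-algebra: 0·x = 0 and (k+1)·x = x ⊕ k·x. -/
def MVAlgebra.nsmul {A : Type u} (M : MVAlgebra A) : ℕ → A → A
  | 0, _ => M.zero
  | k + 1, x => M.oplus x (M.nsmul k x)


/-!
With `b = ¬a`, the multiples `0·b, 1·b, …, n·b` play the role of `0, 1/n, …, 1`. The relation
`(n-1)·b = ¬b` gives `n·b = b ⊕ ¬b = 1`, and MV6 then propagates it downwards to
`¬(k·b) = (n-k)·b`. If `i·b = j·b` with `i < j ≤ n`, then `1 = ¬(j·b) ⊕ i·b` is a multiple of `b`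
of order at most `n - 1`, forcing `a = (n-1)·b = 1`. Hence `k/n ↦ k·b` is an embedding.
Conversely an embedding `f` gives `a = f((n-1)/n)`, with `¬a = f(1/n)` and `(n-1)·f(1/n) = a`.
-/

namespace MVAlgebra

variable {A : Type u} (M : MVAlgebra A)

theorem zero_oplus (x : A) : M.oplus M.zero x = x := by
  rw [M.mv2, M.mv3]

theorem one_oplus (x : A) : M.oplus (M.neg M.zero) x = M.neg M.zero := by
  rw [M.mv2, M.mv5]

theorem neg_oplus_self (x : A) : M.oplus (M.neg x) x = M.neg M.zero := by
  simpa only [M.mv4, M.zero_oplus, M.one_oplus] using M.mv6 (M.neg M.zero) x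

/-- The hypothesis says `x ⊙ y = 0`. -/
theorem neg_oplus_oplus_of_neg_oplus_neg_eq_one {x y : A}
    (h : M.oplus (M.neg x) (M.neg y) = M.neg M.zero) :
    M.oplus (M.neg (M.oplus x y)) y = M.neg x := by
  simpa only [M.mv4, h, M.zero_oplus] using M.mv6 (M.neg x) y

theorem nsmul_succ' (k : ℕ) (x : A) : M.nsmul (k + 1) x = M.oplus (M.nsmul k x) x := by
  rw [nsmul, M.mv2]

theorem nsmul_add (i j : ℕ) (x : A) :
    M.nsmul (i + j) x = M.oplus (M.nsmul i x) (M.nsmul j x) := by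
  induction i with
  | zero => rw [Nat.zero_add, nsmul, M.zero_oplus]
  | succ i ih => rw [Nat.succ_add, nsmul, ih, nsmul, M.mv1]

theorem nsmul_eq_one_of_le {k m : ℕ} {x : A} (hk : M.nsmul k x = M.neg M.zero) (hkm : k ≤ m) :
    M.nsmul m x = M.neg M.zero := by
  rw [← Nat.add_sub_cancel' hkm, M.nsmul_add, hk, M.one_oplus]

theorem nsmul_min_of_nsmul_eq_one {n : ℕ} {x : A} (hn : M.nsmul n x = M.neg M.zero) (k : ℕ) :
    M.nsmul (min n k) x = M.nsmul k x := by
  rcases le_total n k with h | h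
  · rw [min_eq_left h, hn, M.nsmul_eq_one_of_le hn h]
  · rw [min_eq_right h]

section

variable {M} {n : ℕ} {b : A}

theorem nsmul_eq_one (hn : 0 < n) (hb : M.nsmul (n - 1) b = M.neg b) :
    M.nsmul n b = M.neg M.zero := by
  rw [← Nat.sub_add_cancel hn, M.nsmul_succ', hb, M.neg_oplus_self]

theorem neg_nsmul (hn : 0 < n) (hb : M.nsmul (n - 1) b = M.neg b) {k : ℕ} (hk : k ≤ n) :
    M.neg (M.nsmul k b) = M.nsmul (n - k) b := by
  suffices h : ∀ j k, k + j = n → M.neg (M.nsmul k b) = M.nsmul j b from h _ _ (by omega)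
  intro j
  induction j with
  | zero =>
    intro k hkn
    rw [show k = n by omega, nsmul_eq_one hn hb, M.mv4, nsmul]
  | succ j ih =>
    intro k hkj
    -- `¬(k·b) ⊕ ¬b = ¬(k·b) ⊕ k·b ⊕ j·b = 1`, so `¬(k·b) = ¬((k+1)·b) ⊕ b`.
    have horth : M.oplus (M.neg (M.nsmul k b)) (M.neg b) = M.neg M.zero := by
      rw [← hb, show n - 1 = k + j by omega, M.nsmul_add, ← M.mv1, M.neg_oplus_self,
        M.one_oplus]
    rw [← M.neg_oplus_oplus_of_neg_oplus_neg_eq_one horth, ← M.nsmul_succ',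
      ih (k + 1) (by omega), M.nsmul_succ']

theorem nsmul_injOn (hn : 0 < n) (hb : M.nsmul (n - 1) b = M.neg b)
    (hb1 : M.neg b ≠ M.neg M.zero) : Set.InjOn (M.nsmul · b) (Set.Iic n) := by
  suffices h : ∀ i j, i < j → j ≤ n → M.nsmul i b ≠ M.nsmul j b by
    intro i hi j hj hij
    by_contra hne
    rcases Nat.lt_or_gt_of_ne hne with hlt | hlt
    · exact h i j hlt hj hij
    · exact h j i hlt hi hij.symm
  intro i j hij hj heq
  -- `1 = ¬(j·b) ⊕ i·b = (n - j + i)·b`, and `n - j + i ≤ n - 1`.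
  have hone : M.nsmul (n - j + i) b = M.neg M.zero := by
    rw [M.nsmul_add, ← neg_nsmul hn hb hj, heq, M.neg_oplus_self]
  exact hb1 (hb ▸ M.nsmul_eq_one_of_le hone (by omega))

end

end MVAlgebra

def Luk.mk (n : ℕ+) (k : ℕ) (hk : k ≤ (n : ℕ)) : Luk n :=
  ⟨(k : ℚ) / (n : ℕ), k, hk, rfl⟩

def Luk.num {n : ℕ+} (x : Luk n) : ℕ := ⌊x.1 * (n : ℕ)⌋₊

namespace Luk

variable {n : ℕ+}

theorem num_of_val_eq {x : Luk n} {k : ℕ} (h : x.1 = (k : ℚ) / (n : ℕ)) : x.num = k := by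
  rw [num, h, div_mul_cancel₀ _ (by exact_mod_cast n.ne_zero), Nat.floor_natCast]

theorem val_eq_num_div (x : Luk n) : x.1 = (x.num : ℚ) / (n : ℕ) := by
  obtain ⟨k, -, h⟩ := x.2
  rwa [num_of_val_eq h]

theorem num_le (x : Luk n) : x.num ≤ n := by
  obtain ⟨k, hk, h⟩ := x.2
  rwa [num_of_val_eq h]

theorem num_injective : Function.Injective (num : Luk n → ℕ) := fun x y h =>
  Subtype.ext (by rw [val_eq_num_div x, val_eq_num_div y, h])

theorem num_mk (k : ℕ) (hk : k ≤ (n : ℕ)) : (mk n k hk).num = k :=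
  num_of_val_eq rfl

theorem num_lukZero : (lukZero n).num = 0 :=
  num_of_val_eq (by simp [lukZero])

theorem num_lukNeg (x : Luk n) : (lukNeg x).num = n - x.num := by
  apply num_of_val_eq
  have hn : ((n : ℕ) : ℚ) ≠ 0 := by exact_mod_cast n.ne_zero
  show 1 - x.1 = _
  rw [val_eq_num_div x, Nat.cast_sub (num_le x), sub_div, div_self hn]

theorem num_lukOplus (x y : Luk n) : (lukOplus x y).num = min (n : ℕ) (x.num + y.num) := by
  apply num_of_val_eq
  have hn : ((n : ℕ) : ℚ) ≠ 0 := by exact_mod_cast n.ne_zero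
  show min 1 (x.1 + y.1) = _
  rw [val_eq_num_div x, val_eq_num_div y, Nat.cast_min, Nat.cast_add,
    ← min_div_div_right (by positivity), div_self hn, add_div]

theorem nsmul_map_mk_one {A : Type u} (M : MVAlgebra A) {f : Luk n → A}
    (hop : ∀ x y, f (lukOplus x y) = M.oplus (f x) (f y)) (hz : f (lukZero n) = M.zero)
    (k : ℕ) (hk : k ≤ (n : ℕ)) :
    M.nsmul k (f (mk n 1 n.pos)) = f (mk n k hk) := by
  induction k with
  | zero =>
    rw [MVAlgebra.nsmul, ← hz]
    congr 1
    exact num_injective (by rw [num_mk, num_lukZero])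
  | succ k ih =>
    rw [MVAlgebra.nsmul, ih (by omega), ← hop]
    congr 1
    exact num_injective (by rw [num_lukOplus, num_mk, num_mk, num_mk]; omega)

end Luk

/-- Łₙ embeds into an MV-algebra A iff A has an element a ≠ ¬0 = 1 with
(n-1)·(¬a) = a. -/
theorem luk_embeds_iff_element (n : ℕ+) {A : Type u} (M : MVAlgebra A) :
    (∃ f : Luk n → A, Function.Injective f ∧
        (∀ x y, f (lukOplus x y) = M.oplus (f x) (f y)) ∧
        (∀ x, f (lukNeg x) = M.neg (f x)) ∧
        f (lukZero n) = M.zero) ↔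
      ∃ a : A, a ≠ M.neg M.zero ∧ M.nsmul ((n : ℕ) - 1) (M.neg a) = a := by
  constructor
  · rintro ⟨f, hinj, hop, hneg, hz⟩
    have hneg_top : lukNeg (Luk.mk n (n - 1) (Nat.sub_le _ _)) = Luk.mk n 1 n.pos :=
      Luk.num_injective (by rw [Luk.num_lukNeg, Luk.num_mk, Luk.num_mk]; have := n.pos; omega)
    refine ⟨f (Luk.mk n (n - 1) (Nat.sub_le _ _)), fun h => ?_, ?_⟩
    · have hnum := congrArg Luk.num (hinj (h.trans (by rw [← hz, hneg (lukZero n)])))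
      rw [Luk.num_mk, Luk.num_lukNeg, Luk.num_lukZero] at hnum
      have := n.pos
      omega
    · rw [← hneg, hneg_top, Luk.nsmul_map_mk_one M hop hz]
  · rintro ⟨a, ha, hna⟩
    have hb : M.nsmul ((n : ℕ) - 1) (M.neg a) = M.neg (M.neg a) := by rw [hna, M.mv4]
    have hinj := MVAlgebra.nsmul_injOn n.pos hb (by rwa [M.mv4])
    refine ⟨fun x => M.nsmul x.num (M.neg a), fun x y h => Luk.num_injective
      (hinj (Luk.num_le x) (Luk.num_le y) h), fun x y => ?_, fun x => ?_, ?_⟩ <;> dsimp only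
    · rw [Luk.num_lukOplus, M.nsmul_min_of_nsmul_eq_one (MVAlgebra.nsmul_eq_one n.pos hb),
        M.nsmul_add]
    · rw [Luk.num_lukNeg, MVAlgebra.neg_nsmul n.pos hb (Luk.num_le x)]
    · rw [Luk.num_lukZero]; rfl
end

section
/- Every finite MV-algebra embeds into a product of its critical subalgebras: if A is a finite MV-algebra, then there exist a finite index type I, a family (S_t)_{t∈I} of subalgebras of A each of which is critical as an MV-algebra with the induced operations, and an injective homomorphism from A into ∏_{t∈I} S_t (componentwise operations). -/
universe u v

/-- A subset is a subalgebra if it contains 0 and is closed under ⊕ and ¬. -/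
def IsSubalg {A : Type u} (M : MVAlgebra A) (S : Set A) : Prop :=
  M.zero ∈ S ∧ (∀ x ∈ S, ∀ y ∈ S, M.oplus x y ∈ S) ∧ ∀ x ∈ S, M.neg x ∈ S

/-- The MV-algebra induced on a subalgebra. -/
def MVAlgebra.restrict {A : Type u} (M : MVAlgebra A) (S : Set A) (h : IsSubalg M S) :
    MVAlgebra S where
  oplus x y := ⟨M.oplus x y, h.2.1 x x.2 y y.2⟩
  neg x := ⟨M.neg x, h.2.2 x x.2⟩
  zero := ⟨M.zero, h.1⟩
  mv1 x y z := Subtype.ext (M.mv1 x y z)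
  mv2 x y := Subtype.ext (M.mv2 x y)
  mv3 x := Subtype.ext (M.mv3 x)
  mv4 x := Subtype.ext (M.mv4 x)
  mv5 x := Subtype.ext (M.mv5 x)
  mv6 x y := Subtype.ext (M.mv6 x y)

/-- The product MV-algebra, with componentwise operations. -/
def MVAlgebra.pi {ι : Type u} {B : ι → Type v} (M : ∀ i, MVAlgebra (B i)) :
    MVAlgebra (∀ i, B i) where
  oplus x y := fun i => (M i).oplus (x i) (y i)
  neg x := fun i => (M i).neg (x i)
  zero := fun i => (M i).zero
  mv1 x y z := funext fun i => (M i).mv1 (x i) (y i) (z i)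
  mv2 x y := funext fun i => (M i).mv2 (x i) (y i)
  mv3 x := funext fun i => (M i).mv3 (x i)
  mv4 x := funext fun i => (M i).mv4 (x i)
  mv5 x := funext fun i => (M i).mv5 (x i)
  mv6 x y := funext fun i => (M i).mv6 (x i) (y i)

/-- A homomorphism of MV-algebras: a map preserving ⊕, ¬ and 0. -/
def IsMVHom {A : Type u} {B : Type u} (M : MVAlgebra A) (N : MVAlgebra B) (f : A → B) : Prop :=
  (∀ x y, f (M.oplus x y) = N.oplus (f x) (f y)) ∧ (∀ x, f (M.neg x) = N.neg (f x)) ∧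
    f M.zero = N.zero

/-- A finite MV-algebra is critical if it admits no injective homomorphism into
a product of proper subalgebras of itself. -/
def Critical {B : Type u} (M : MVAlgebra B) : Prop :=
  ¬ ∃ (I : Type u) (S : I → Set B) (hS : ∀ t, IsSubalg M (S t)),
      (∀ t, S t ≠ Set.univ) ∧
      ∃ f : B → ∀ t, (S t : Set B), Function.Injective f ∧
        IsMVHom M (MVAlgebra.pi fun t => M.restrict (S t) (hS t)) f

theorem key_embed {A : Type u} [Finite A] (M : MVAlgebra A) :
    ∀ n (T : Set A) (hT : IsSubalg M T), T.ncard ≤ n →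
    ∃ (I : Type u) (_ : Finite I) (S : I → Set A) (hS : ∀ t, IsSubalg M (S t)),
      (∀ t, Critical (M.restrict (S t) (hS t))) ∧
      ∃ f : ↥T → ∀ t, ↥(S t), Function.Injective f ∧
        IsMVHom (M.restrict T hT) (MVAlgebra.pi fun t => M.restrict (S t) (hS t)) f := by
  intro n
  induction n with
  | zero =>
    intro T hT hcard
    exfalso
    have h0 : T.ncard = 0 := Nat.le_zero.mp hcard
    have : T = ∅ := (Set.ncard_eq_zero (Set.toFinite T)).mp h0
    rw [this] at hT
    exact hT.1
  | succ n ih =>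
    intro T hT hcard
    by_cases hc : Critical (M.restrict T hT)
    · refine ⟨PUnit, inferInstance, fun _ => T, fun _ => hT, fun _ => hc,
        fun a _ => a, ?_, ⟨fun _ _ => rfl, fun _ => rfl, rfl⟩⟩
      intro x y h
      exact congrFun h PUnit.unit
    · obtain ⟨I0, S', hS', hprop, g, hginj, hghom⟩ := not_not.mp hc
      -- separating indices for distinct pairs
      set J := {p : ↥T × ↥T // p.1 ≠ p.2} with hJ
      have hsep : ∀ p : J, ∃ t, g p.1.1 t ≠ g p.1.2 t := by
        intro p
        exact Function.ne_iff.mp (fun h => p.2 (hginj h))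
      let idx : J → I0 := fun p => (hsep p).choose
      have hidx : ∀ p : J, g p.1.1 (idx p) ≠ g p.1.2 (idx p) := fun p => (hsep p).choose_spec
      -- images in A of the proper subalgebras
      let U : J → Set A := fun j => Subtype.val '' S' (idx j)
      have hU : ∀ j, IsSubalg M (U j) := by
        intro j
        refine ⟨⟨⟨M.zero, hT.1⟩, (hS' (idx j)).1, rfl⟩, ?_, ?_⟩
        · rintro x ⟨a, ha, rfl⟩ y ⟨b, hb, rfl⟩
          exact ⟨_, (hS' (idx j)).2.1 a ha b hb, rfl⟩
        · rintro x ⟨a, ha, rfl⟩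
          exact ⟨_, (hS' (idx j)).2.2 a ha, rfl⟩
      have hUcard : ∀ j, (U j).ncard ≤ n := by
        intro j
        have h1 : (U j).ncard = (S' (idx j)).ncard :=
          Set.ncard_image_of_injective _ Subtype.val_injective
        have h2 : S' (idx j) ⊂ Set.univ := Set.ssubset_univ_iff.mpr (hprop (idx j))
        have h3 : (S' (idx j)).ncard < (Set.univ : Set ↥T).ncard :=
          Set.ncard_lt_ncard h2 Set.finite_univ
        have h4 : (Set.univ : Set ↥T).ncard = T.ncard := by
          rw [Set.ncard_univ, Nat.card_coe_set_eq]
        omega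
      -- apply induction hypothesis to each image
      have IH := fun j => ih (U j) (hU j) (hUcard j)
      choose I1 fin1 S1 hS1 hcrit1 f1 hf1 using IH
      haveI : ∀ j, Finite (I1 j) := fin1
      -- the comparison map from a proper subalgebra (inside T) to its image
      let e : ∀ j, ↥(S' (idx j)) → ↥(U j) :=
        fun j a => ⟨a.1.1, ⟨a.1, a.2, rfl⟩⟩
      have heinj : ∀ j, Function.Injective (e j) := by
        intro j a b hab
        have h2 : (e j a).1 = (e j b).1 := congrArg Subtype.val hab
        exact Subtype.ext (Subtype.ext h2)
      refine ⟨Σ j : J, I1 j, inferInstance, fun p => S1 p.1 p.2, fun p => hS1 p.1 p.2,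
        fun p => hcrit1 p.1 p.2, fun x p => f1 p.1 (e p.1 (g x (idx p.1))) p.2, ?_, ?_, ?_, ?_⟩
      · -- injectivity
        intro x y hxy
        by_contra hne
        set p : J := ⟨(x, y), hne⟩ with hp
        have h1 : f1 p (e p (g x (idx p))) = f1 p (e p (g y (idx p))) :=
          funext fun k => congrFun hxy ⟨p, k⟩
        have h2 := heinj p ((hf1 p).1 h1)
        exact hidx p h2
      · -- oplus
        intro x y
        funext p
        have hg := congrFun (hghom.1 x y) (idx p.1)
        have he : e p.1 (g (((M.restrict T hT)).oplus x y) (idx p.1)) =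
            (M.restrict (U p.1) (hU p.1)).oplus (e p.1 (g x (idx p.1))) (e p.1 (g y (idx p.1))) := by
          rw [hg]; exact Subtype.ext rfl
        show f1 p.1 (e p.1 (g ((M.restrict T hT).oplus x y) (idx p.1))) p.2 = _
        rw [he, (hf1 p.1).2.1 _ _]
        rfl
      · -- neg
        intro x
        funext p
        have hg := congrFun (hghom.2.1 x) (idx p.1)
        have he : e p.1 (g ((M.restrict T hT).neg x) (idx p.1)) =
            (M.restrict (U p.1) (hU p.1)).neg (e p.1 (g x (idx p.1))) := by
          rw [hg]; exact Subtype.ext rfl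
        show f1 p.1 (e p.1 (g ((M.restrict T hT).neg x) (idx p.1))) p.2 = _
        rw [he, (hf1 p.1).2.2.1 _]
        rfl
      · -- zero
        funext p
        have hg := congrFun hghom.2.2 (idx p.1)
        have he : e p.1 (g (M.restrict T hT).zero (idx p.1)) =
            (M.restrict (U p.1) (hU p.1)).zero := by
          rw [hg]; exact Subtype.ext rfl
        show f1 p.1 (e p.1 (g (M.restrict T hT).zero (idx p.1))) p.2 = _
        rw [he, (hf1 p.1).2.2.2]
        rfl

/-- Every finite MV-algebra embeds into a finite product of its critical subalgebras
(each carrying the induced operations). -/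
theorem finite_embeds_into_critical_subalgebras {A : Type u} [Finite A] (M : MVAlgebra A) :
    ∃ (I : Type u) (_ : Finite I) (S : I → Set A) (hS : ∀ t, IsSubalg M (S t)),
      (∀ t, Critical (M.restrict (S t) (hS t))) ∧
      ∃ f : A → ∀ t, (S t : Set A), Function.Injective f ∧
        IsMVHom M (MVAlgebra.pi fun t => M.restrict (S t) (hS t)) f := by
  have hu : IsSubalg M (Set.univ : Set A) :=
    ⟨trivial, fun _ _ _ _ => trivial, fun _ _ => trivial⟩
  obtain ⟨I, fI, S, hS, hcrit, f, hfinj, hfhom⟩ :=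
    key_embed M (Set.univ : Set A).ncard Set.univ hu le_rfl
  refine ⟨I, fI, S, hS, hcrit, fun a => f ⟨a, trivial⟩, ?_, ?_, ?_, ?_⟩
  · intro x y h
    have := hfinj h
    exact congrArg Subtype.val this
  · intro x y
    exact hfhom.1 ⟨x, trivial⟩ ⟨y, trivial⟩
  · intro x
    exact hfhom.2.1 ⟨x, trivial⟩
  · exact hfhom.2.2
end
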